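/- Let q be a prime power, let F_q be a finite field with q elements, and let n, k, δ, α be positive integers with α ≥ 2 and δ + k ≤ n. A set C of k-dimensional subspaces of F_q^n is an α-(n,k,δ)^c_q covering Grassmannian code if and only if C^⊥ = {V^⊥ : V ∈ C} is an (n−k−δ+1)-(n, n−k, α−1)^m_q multiple Grassmannian code. -/

import Mathlib

open scoped Classical

/-- The orthogonal complement of a subspace of `F^n` with respect to the
standard symmetric bilinear form `b(x,y) = ∑ i, x i * y i`. -/
def perp {F : Type*} [Field F] {n : ℕ}
    (V : Submodule F (Fin n → F)) : Submodule F (Fin n → F) where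
  carrier := {x | ∀ v ∈ V, ∑ i, x i * v i = 0}
  zero_mem' := by
    intro v hv
    simp
  add_mem' := by
    intro a b ha hb v hv
    simp only [Set.mem_setOf_eq] at *
    simp [Pi.add_apply, add_mul, Finset.sum_add_distrib, ha v hv, hb v hv]
  smul_mem' := by
    intro c a ha v hv
    simp only [Set.mem_setOf_eq] at *
    simp [Pi.smul_apply, smul_eq_mul, mul_assoc, ← Finset.mul_sum, ha v hv]

/-!
Taking orthogonal complements reverses inclusions, so a set `S` of subspaces spans a subspace
of dimension `< r` exactly when some subspace `T` of dimension `n + 1 - r` lies in `V^⊥` for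
every `V ∈ S`. Both code conditions therefore say that no `a` codewords have orthogonal
complements containing a common `(n + 1 - r)`-dimensional subspace, with `r = δ + k`.
-/

open Module

theorem Submodule.exists_le_finrank_eq {K V : Type*} [DivisionRing K] [AddCommGroup V]
    [Module K V] (W : Submodule K V) {m : ℕ} (hm : m ≤ finrank K W) :
    ∃ T ≤ W, finrank K T = m := by
  obtain ⟨f, hf⟩ := exists_linearIndependent_of_le_finrank hm
  refine ⟨(span K (Set.range f)).map W.subtype, map_subtype_le _ _, ?_⟩
  rw [finrank_map_subtype_eq, finrank_span_eq_card hf, Fintype.card_fin]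

theorem Submodule.finrank_fin_fun_le {K : Type*} [DivisionRing K] {n : ℕ}
    (W : Submodule K (Fin n → K)) : finrank K W ≤ n :=
  (finrank_le W).trans_eq (finrank_fin_fun K)

theorem Set.Finite.le_ncard_iff_exists_finset {α : Type*} {X : Set α} (hX : X.Finite) {a : ℕ} :
    a ≤ X.ncard ↔ ∃ S : Finset α, ↑S ⊆ X ∧ S.card = a := by
  rw [ncard_eq_toFinset_card X hX]
  constructor
  · rintro ha
    obtain ⟨S, hSX, rfl⟩ := Finset.exists_subset_card_eq ha
    exact ⟨S, by simpa using hSX, rfl⟩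
  · rintro ⟨S, hSX, rfl⟩
    exact Finset.card_le_card (by simpa using hSX)

section Perp

variable {F : Type*} [Field F] {n : ℕ}

theorem perp_eq_orthogonal (V : Submodule F (Fin n → F)) :
    perp V = (1 : Matrix (Fin n) (Fin n) F).toBilin'.orthogonal V := by
  ext x
  simp [perp, LinearMap.BilinForm.mem_orthogonal_iff, Matrix.toBilin'_apply', dotProduct, mul_comm]

theorem Matrix.nondegenerate_toBilin'_one :
    (1 : Matrix (Fin n) (Fin n) F).toBilin'.Nondegenerate :=
  LinearMap.BilinForm.nondegenerate_toBilin'_of_det_ne_zero' _ (by simp)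

theorem finrank_perp (V : Submodule F (Fin n → F)) :
    finrank F (perp V) = n - finrank F V := by
  rw [perp_eq_orthogonal, LinearMap.BilinForm.finrank_orthogonal
    Matrix.nondegenerate_toBilin'_one, finrank_fin_fun]

theorem perp_perp (V : Submodule F (Fin n → F)) : perp (perp V) = V := by
  rw [perp_eq_orthogonal, perp_eq_orthogonal]
  exact LinearMap.BilinForm.orthogonal_orthogonal Matrix.nondegenerate_toBilin'_one
    (Matrix.isSymm_toBilin'_iff_isSymm.2 Matrix.isSymm_one).isRefl V

theorem perp_injective : Function.Injective (perp : Submodule F (Fin n → F) → _) :=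
  Function.LeftInverse.injective perp_perp

theorem le_perp_comm {V W : Submodule F (Fin n → F)} : V ≤ perp W ↔ W ≤ perp V := by
  suffices ∀ {V W : Submodule F (Fin n → F)}, V ≤ perp W → W ≤ perp V from ⟨this, this⟩
  intro V W h w hw v hv
  simpa [mul_comm] using h hv w hw

theorem le_perp_sup_iff {S : Finset (Submodule F (Fin n → F))} {T : Submodule F (Fin n → F)} :
    T ≤ perp (S.sup id) ↔ ∀ V ∈ S, T ≤ perp V := by
  simp [le_perp_comm (V := T)]

theorem exists_finrank_eq_le_perp_iff (W : Submodule F (Fin n → F)) (m : ℕ) :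
    (∃ T : Submodule F (Fin n → F), finrank F T = m ∧ T ≤ perp W) ↔ m + finrank F W ≤ n := by
  have hW := Submodule.finrank_fin_fun_le W
  constructor
  · rintro ⟨T, rfl, hT⟩
    have := Submodule.finrank_mono hT
    rw [finrank_perp] at this
    omega
  · intro hm
    obtain ⟨T, hT, hTm⟩ := (perp W).exists_le_finrank_eq (m := m) (by rw [finrank_perp]; omega)
    exact ⟨T, hTm, hT⟩

end Perp

theorem forall_le_finrank_sup_iff_ncard_lt {F : Type*} [Field F] [Finite F] {n : ℕ}
    (C : Set (Submodule F (Fin n → F))) (a r : ℕ) :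
    (∀ S : Finset (Submodule F (Fin n → F)), ↑S ⊆ C → S.card = a → r ≤ finrank F ↥(S.sup id)) ↔
      ∀ T : Submodule F (Fin n → F), finrank F T = n + 1 - r →
        {V | V ∈ C ∧ T ≤ perp V}.ncard < a := by
  rw [← not_iff_not]
  push Not
  simp_rw [(Set.toFinite _).le_ncard_iff_exists_finset]
  constructor
  · rintro ⟨S, hSC, hSa, hSr⟩
    have := Submodule.finrank_fin_fun_le (S.sup id)
    obtain ⟨T, hT, hTS⟩ := (exists_finrank_eq_le_perp_iff (S.sup id) (n + 1 - r)).2 (by omega)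
    exact ⟨T, hT, S, fun V hV => ⟨hSC hV, le_perp_sup_iff.1 hTS V hV⟩, hSa⟩
  · rintro ⟨T, hT, S, hS, hSa⟩
    refine ⟨S, fun V hV => (hS hV).1, hSa, ?_⟩
    have := (exists_finrank_eq_le_perp_iff (S.sup id) _).1
      ⟨T, hT, le_perp_sup_iff.2 fun V hV => (hS hV).2⟩
    omega

theorem stmt4_general (F : Type) [Field F] [Fintype F] (n k d a : ℕ) (ha : 2 ≤ a) (hdkn : d + k ≤ n)
    (C : Set (Submodule F (Fin n → F)))
    (hC : ∀ V ∈ C, Module.finrank F V = k) :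
    (∀ S : Finset (Submodule F (Fin n → F)), ↑S ⊆ C → S.card = a →
        d + k ≤ Module.finrank F ↥(S.sup id)) ↔
      ((∀ U ∈ perp '' C, Module.finrank F U = n - k) ∧
        ∀ T : Submodule F (Fin n → F), Module.finrank F T = n - k - d + 1 →
          Set.ncard {U | U ∈ perp '' C ∧ T ≤ U} ≤ a - 1) := by
  have hdim : ∀ U ∈ perp '' C, finrank F U = n - k := by
    rintro _ ⟨V, hV, rfl⟩
    rw [finrank_perp, hC V hV]
  have hncard (T : Submodule F (Fin n → F)) :
      {U | U ∈ perp '' C ∧ T ≤ U}.ncard = {V | V ∈ C ∧ T ≤ perp V}.ncard := by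
    rw [← Set.ncard_image_of_injective {V | V ∈ C ∧ T ≤ perp V} perp_injective]
    exact congrArg Set.ncard (Set.image_inter_preimage perp C (Set.Ici T)).symm
  rw [forall_le_finrank_sup_iff_ncard_lt C a (d + k), show n - k - d + 1 = n + 1 - (d + k) by omega]
  simp only [hncard, Nat.le_sub_one_iff_lt (by omega : 0 < a)]
  exact ⟨fun h => ⟨hdim, h⟩, And.right⟩

/-- A set `C` of `k`-dimensional subspaces of `F_q^n` is an `a`-`(n,k,d)^c_q`
covering Grassmannian code iff `C^⊥ = {V^⊥ : V ∈ C}` is an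
`(n-k-d+1)`-`(n, n-k, a-1)^m_q` multiple Grassmannian code. -/
theorem stmt4 (q : ℕ) (hq : IsPrimePow q) (F : Type) [Field F] [Fintype F]
    (hF : Fintype.card F = q) (n k d a : ℕ)
    (hn : 1 ≤ n) (hk : 1 ≤ k) (hd : 1 ≤ d) (ha : 2 ≤ a) (hdkn : d + k ≤ n)
    (C : Set (Submodule F (Fin n → F)))
    (hC : ∀ V ∈ C, Module.finrank F V = k) :
    (∀ S : Finset (Submodule F (Fin n → F)), ↑S ⊆ C → S.card = a →
        d + k ≤ Module.finrank F ↥(S.sup id)) ↔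
      ((∀ U ∈ perp '' C, Module.finrank F U = n - k) ∧
        ∀ T : Submodule F (Fin n → F), Module.finrank F T = n - k - d + 1 →
          Set.ncard {U | U ∈ perp '' C ∧ T ≤ U} ≤ a - 1) :=
  stmt4_general F n k d a ha hdkn C hC
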